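/- Define m : ℕ → ℕ on the digits by m 2 = 5, m 5 = 2, and m d = d for d ∈ {1,8}, and define mir : ℕ → ℕ on two-digit numbers by mir n = 10 * m (n % 10) + m (n / 10). Then the 4×4 matrix W given by W i j = mir (M4 i (3 - j)), where M4 has rows (52,11,85,28), (88,25,51,12), (21,82,18,55), (15,58,22,81), is a magic square with magic constant 176: every row, every column, and both main diagonals of W sum to 176. -/

import Mathlib

def M4 : Fin 4 → Fin 4 → ℕ :=
  ![![52, 11, 85, 28],
    ![88, 25, 51, 12],
    ![21, 82, 18, 55],
    ![15, 58, 22, 81]]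

def m : ℕ → ℕ
  | 2 => 5
  | 5 => 2
  | d => d

def mir (n : ℕ) : ℕ := 10 * m (n % 10) + m (n / 10)

def W : Fin 4 → Fin 4 → ℕ := fun i j => mir (M4 i (3 - j))

theorem W_eq : W = ![![85, 28, 11, 52],
                     ![51, 12, 25, 88],
                     ![22, 81, 58, 15],
                     ![18, 55, 82, 21]] := by
  ext i j
  fin_cases i <;> fin_cases j <;> rfl

theorem W_magic :
    (∀ i : Fin 4, ∑ j, W i j = 176) ∧
    (∀ j : Fin 4, ∑ i, W i j = 176) ∧
    (∑ i, W i i = 176) ∧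
    (∑ i : Fin 4, W i (3 - i) = 176) := by
  rw [W_eq]
  decide
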